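/- Let Ω be a compact metric space and let C be a subset of the space of Borel probability measures on Ω that is closed in the topology of weak convergence and convex (i.e., t·p + (1−t)·q ∈ C whenever p, q ∈ C and t ∈ [0,1]). Let x ∈ Ω and let E be a random variable with the exponential distribution of rate 1. For a finite nonnegative Borel measure μ on Ω define ℓ(μ) = P( (μ + E·δ_x)/(μ(Ω) + E) ∈ C ), where δ_x is the Dirac unit mass at x. Then for all finite nonnegative Borel measures μ, μ' on Ω, ℓ(μ + μ') ≥ ℓ(μ)·ℓ(μ'). -/

import Mathlib

open MeasureTheory ProbabilityTheory
open scoped ENNReal NNReal Classical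

/-- `ℓ(μ) = P((μ + E·δ_x)/(μ(Ω) + E) ∈ C)` where `E ∼ Exp(1)`: the exponential
measure of the set of `t` such that the normalization of `μ + t·δ_x` lies in `C`. -/
noncomputable def ell {Ω : Type*} [MeasurableSpace Ω]
    (C : Set (ProbabilityMeasure Ω)) (x : Ω) (μ : Measure Ω) : ℝ≥0∞ :=
  expMeasure 1 {t : ℝ | ∃ q ∈ C, (q : Measure Ω)
    = (μ Set.univ + ENNReal.ofReal t)⁻¹ • (μ + ENNReal.ofReal t • Measure.dirac x)}

namespace StmtAux

open Real Set

lemma nu_apply {B : Set ℝ} (hB : MeasurableSet B) :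
    expMeasure 1 B = ∫⁻ x in B, exponentialPDF 1 x := by
  rw [expMeasure, gammaMeasure, withDensity_apply _ hB]; rfl

lemma nu_Iio_zero : expMeasure 1 (Iio (0:ℝ)) = 0 := by
  rw [nu_apply measurableSet_Iio]
  exact lintegral_exponentialPDF_of_nonpos le_rfl

lemma nu_Ici {a : ℝ} (ha : 0 ≤ a) :
    expMeasure 1 (Ici a) = ENNReal.ofReal (rexp (-a)) := by
  have hprob : IsProbabilityMeasure (expMeasure 1) := isProbabilityMeasure_expMeasure one_pos
  have hIic : expMeasure 1 (Iic a) = ENNReal.ofReal (1 - rexp (-a)) := by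
    rw [nu_apply measurableSet_Iic, lintegral_exponentialPDF_eq_antiDeriv one_pos a]
    simp [ha]
  have hsingle : expMeasure 1 ({a} : Set ℝ) = 0 := by
    rw [expMeasure, gammaMeasure]
    exact withDensity_absolutelyContinuous _ _ (volume_singleton)
  have hIio : expMeasure 1 (Iio a) = ENNReal.ofReal (1 - rexp (-a)) := by
    refine le_antisymm ?_ ?_
    · rw [← hIic]; exact measure_mono Iio_subset_Iic_self
    · rw [← hIic]
      calc expMeasure 1 (Iic a) ≤ expMeasure 1 (Iio a ∪ {a}) := by
            refine measure_mono fun y hy => ?_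
            rcases (mem_Iic.mp hy).lt_or_eq with h | h
            · exact Or.inl h
            · exact Or.inr h
        _ ≤ expMeasure 1 (Iio a) + expMeasure 1 {a} := measure_union_le _ _
        _ = expMeasure 1 (Iio a) := by rw [hsingle, add_zero]
  rw [← compl_Iio, measure_compl measurableSet_Iio (measure_ne_top _ _), measure_univ, hIio]
  have hexp1 : rexp (-a) ≤ 1 := exp_le_one_iff.mpr (neg_nonpos.mpr ha)
  rw [← ENNReal.ofReal_one, ← ENNReal.ofReal_sub _ (by linarith)]
  norm_num

lemma nu_translate {a : ℝ} (ha : 0 ≤ a) {B : Set ℝ} (hB : B ⊆ Ici 0) :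
    ENNReal.ofReal (rexp (-a)) * expMeasure 1 B ≤ expMeasure 1 ((a + ·) '' B) := by
  obtain ⟨U, hUsub, hUmeas, hUeq⟩ := exists_measurable_superset (expMeasure 1) ((a + ·) '' B)
  set V : Set ℝ := ((a + ·) ⁻¹' U) ∩ Ici 0 with hVdef
  have hVmeas : MeasurableSet V := (hUmeas.preimage (measurable_const_add a)).inter measurableSet_Ici
  have hBV : B ⊆ V := fun b hb => ⟨hUsub ⟨b, hb, rfl⟩, hB hb⟩
  have hptwise : ∀ s : ℝ, V.indicator (exponentialPDF 1) s
      ≤ ENNReal.ofReal (rexp a) * U.indicator (exponentialPDF 1) (a + s) := by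
    intro s
    by_cases hs : s ∈ V
    · have hsU : a + s ∈ U := hs.1
      have hs0 : (0:ℝ) ≤ s := hs.2
      rw [Set.indicator_of_mem hs, Set.indicator_of_mem hsU]
      rw [exponentialPDF_of_nonneg hs0, exponentialPDF_of_nonneg (by linarith : (0:ℝ) ≤ a + s)]
      rw [← ENNReal.ofReal_mul (exp_nonneg a)]
      apply le_of_eq
      congr 1
      rw [one_mul, one_mul, one_mul, one_mul, ← exp_add]
      congr 1
      ring
    · rw [Set.indicator_of_notMem hs]
      exact zero_le
  have key : expMeasure 1 B ≤ ENNReal.ofReal (rexp a) * expMeasure 1 U := by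
    calc expMeasure 1 B ≤ expMeasure 1 V := measure_mono hBV
      _ = ∫⁻ s, V.indicator (exponentialPDF 1) s := by
          rw [nu_apply hVmeas, lintegral_indicator hVmeas _]
      _ ≤ ∫⁻ s, ENNReal.ofReal (rexp a) * U.indicator (exponentialPDF 1) (a + s) :=
          lintegral_mono hptwise
      _ = ENNReal.ofReal (rexp a) * ∫⁻ s, U.indicator (exponentialPDF 1) (a + s) :=
          lintegral_const_mul' _ _ ENNReal.ofReal_ne_top
      _ = ENNReal.ofReal (rexp a) * ∫⁻ u, U.indicator (exponentialPDF 1) u := by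
          rw [lintegral_add_left_eq_self (U.indicator (exponentialPDF 1)) a]
      _ = ENNReal.ofReal (rexp a) * expMeasure 1 U := by
          rw [lintegral_indicator hUmeas _, ← nu_apply hUmeas]
  calc ENNReal.ofReal (rexp (-a)) * expMeasure 1 B
      ≤ ENNReal.ofReal (rexp (-a)) * (ENNReal.ofReal (rexp a) * expMeasure 1 U) :=
        mul_le_mul_right key _
    _ = expMeasure 1 U := by
        rw [← mul_assoc, ← ENNReal.ofReal_mul (exp_nonneg _), ← exp_add]
        norm_num
    _ = expMeasure 1 ((a + ·) '' B) := hUeq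

lemma mem_S_add {Ω : Type*} [MeasurableSpace Ω]
    (C : Set (ProbabilityMeasure Ω))
    (hconv : ∀ p ∈ C, ∀ q ∈ C, ∀ t ∈ Set.Icc (0 : ℝ) 1, ∀ r : ProbabilityMeasure Ω,
      (r : Measure Ω) = ENNReal.ofReal t • (p : Measure Ω)
          + ENNReal.ofReal (1 - t) • (q : Measure Ω) → r ∈ C)
    (x : Ω) (μ μ' : Measure Ω) [IsFiniteMeasure μ] [IsFiniteMeasure μ']
    {s t : ℝ} (hs0 : 0 ≤ s) (ht0 : 0 ≤ t)
    (hs : ∃ q ∈ C, (q : Measure Ω)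
      = (μ Set.univ + ENNReal.ofReal s)⁻¹ • (μ + ENNReal.ofReal s • Measure.dirac x))
    (ht : ∃ q ∈ C, (q : Measure Ω)
      = (μ' Set.univ + ENNReal.ofReal t)⁻¹ • (μ' + ENNReal.ofReal t • Measure.dirac x)) :
    ∃ q ∈ C, (q : Measure Ω)
      = ((μ + μ') Set.univ + ENNReal.ofReal (s + t))⁻¹
        • ((μ + μ') + ENNReal.ofReal (s + t) • Measure.dirac x) := by
  obtain ⟨q, hqC, hq⟩ := hs
  obtain ⟨q', hq'C, hq'⟩ := ht
  set α : ℝ≥0∞ := μ Set.univ + ENNReal.ofReal s with hαdef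
  set β : ℝ≥0∞ := μ' Set.univ + ENNReal.ofReal t with hβdef
  have hαtop : α ≠ ⊤ := ENNReal.add_ne_top.mpr ⟨measure_ne_top μ _, ENNReal.ofReal_ne_top⟩
  have hβtop : β ≠ ⊤ := ENNReal.add_ne_top.mpr ⟨measure_ne_top μ' _, ENNReal.ofReal_ne_top⟩
  have hmassq : (μ + ENNReal.ofReal s • Measure.dirac x) Set.univ = α := by
    simp [hαdef, Measure.add_apply, Measure.smul_apply, measure_univ]
  have hmassq' : (μ' + ENNReal.ofReal t • Measure.dirac x) Set.univ = β := by
    simp [hβdef, Measure.add_apply, Measure.smul_apply, measure_univ]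
  have h1 : α⁻¹ * α = 1 := by
    have := congrArg (fun m : Measure Ω => m Set.univ) hq
    simp only [Measure.smul_apply, smul_eq_mul, hmassq, measure_univ] at this
    exact this.symm
  have h1' : β⁻¹ * β = 1 := by
    have := congrArg (fun m : Measure Ω => m Set.univ) hq'
    simp only [Measure.smul_apply, smul_eq_mul, hmassq', measure_univ] at this
    exact this.symm
  have hα0 : α ≠ 0 := by intro h; rw [h, mul_zero] at h1; exact zero_ne_one h1
  have hβ0 : β ≠ 0 := by intro h; rw [h, mul_zero] at h1'; exact zero_ne_one h1'
  have heqq : μ + ENNReal.ofReal s • Measure.dirac x = α • (q : Measure Ω) := by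
    rw [hq, smul_smul, ENNReal.mul_inv_cancel hα0 hαtop, one_smul]
  have heqq' : μ' + ENNReal.ofReal t • Measure.dirac x = β • (q' : Measure Ω) := by
    rw [hq', smul_smul, ENNReal.mul_inv_cancel hβ0 hβtop, one_smul]
  set M : ℝ≥0∞ := α + β with hMdef
  have hM0 : M ≠ 0 := fun h => hα0 (by simpa using (add_eq_zero.mp h).1)
  have hMtop : M ≠ ⊤ := ENNReal.add_ne_top.mpr ⟨hαtop, hβtop⟩
  have hsplit0 : (μ + μ') + ENNReal.ofReal (s + t) • Measure.dirac x
      = α • (q : Measure Ω) + β • (q' : Measure Ω) := by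
    rw [← heqq, ← heqq', ENNReal.ofReal_add hs0 ht0, add_smul]
    ext B hB
    simp [Measure.add_apply, Measure.smul_apply]
    ring
  set rmeas : Measure Ω := M⁻¹ • ((μ + μ') + ENNReal.ofReal (s + t) • Measure.dirac x)
    with hrdef
  have hmassr : ((μ + μ') + ENNReal.ofReal (s + t) • Measure.dirac x) Set.univ = M := by
    simp [hMdef, hαdef, hβdef, Measure.add_apply, Measure.smul_apply, measure_univ,
      ENNReal.ofReal_add hs0 ht0]
    ring
  have hprob : IsProbabilityMeasure rmeas := by
    constructor
    rw [hrdef, Measure.smul_apply, hmassr, smul_eq_mul, ENNReal.inv_mul_cancel hM0 hMtop]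
  set r : ProbabilityMeasure Ω := ⟨rmeas, hprob⟩ with hrdef2
  have hcoer : (r : Measure Ω) = rmeas := rfl
  have hαM_ne_top : α / M ≠ ⊤ := (ENNReal.div_lt_top hαtop hM0).ne
  have hβM_ne_top : β / M ≠ ⊤ := (ENNReal.div_lt_top hβtop hM0).ne
  set θ : ℝ := (α / M).toReal with hθdef
  have hθofReal : ENNReal.ofReal θ = α / M := ENNReal.ofReal_toReal hαM_ne_top
  have hsumdiv : α / M + β / M = 1 := by
    rw [ENNReal.div_add_div_same, ← hMdef]
    exact ENNReal.div_self hM0 hMtop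
  have hsumto : (α / M).toReal + (β / M).toReal = 1 := by
    rw [← ENNReal.toReal_add hαM_ne_top hβM_ne_top, hsumdiv, ENNReal.toReal_one]
  have h1θ : 1 - θ = (β / M).toReal := by rw [hθdef]; linarith
  have hofReal1θ : ENNReal.ofReal (1 - θ) = β / M := by
    rw [h1θ, ENNReal.ofReal_toReal hβM_ne_top]
  have hθIcc : θ ∈ Set.Icc (0:ℝ) 1 := by
    constructor
    · exact ENNReal.toReal_nonneg
    · have : 0 ≤ (β / M).toReal := ENNReal.toReal_nonneg
      rw [hθdef]; linarith
  have hreq : (r : Measure Ω) = ENNReal.ofReal θ • (q : Measure Ω)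
      + ENNReal.ofReal (1 - θ) • (q' : Measure Ω) := by
    rw [hcoer, hrdef, hsplit0, hθofReal, hofReal1θ, smul_add, smul_smul, smul_smul]
    rw [ENNReal.div_eq_inv_mul, ENNReal.div_eq_inv_mul]
  have hrC : r ∈ C := hconv q hqC q' hq'C θ hθIcc r hreq
  have hM' : (μ + μ') Set.univ + ENNReal.ofReal (s + t) = M := by
    simp only [Measure.add_apply, hMdef, hαdef, hβdef, ENNReal.ofReal_add hs0 ht0]
    ring
  refine ⟨r, hrC, ?_⟩
  rw [hcoer, hrdef, hM']

end StmtAux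

/-- **Supermultiplicativity of the perturbed deviation toward a closed convex
set.** Let `Ω` be a compact metric space, `C` a closed convex set of Borel
probability measures on `Ω` (closed in the topology of weak convergence),
`x ∈ Ω`, and `E ∼ Exp(1)`. With `ℓ(μ) = P((μ + E·δ_x)/(μ(Ω) + E) ∈ C)`,
for all finite nonnegative Borel measures `μ, μ'` on `Ω`,
`ℓ(μ + μ') ≥ ℓ(μ)·ℓ(μ')`. -/
theorem stmt4 {Ω : Type*} [MetricSpace Ω] [CompactSpace Ω] [MeasurableSpace Ω]
    [BorelSpace Ω] (C : Set (ProbabilityMeasure Ω)) (hC : IsClosed C)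
    (hconv : ∀ p ∈ C, ∀ q ∈ C, ∀ t ∈ Set.Icc (0 : ℝ) 1, ∀ r : ProbabilityMeasure Ω,
      (r : Measure Ω) = ENNReal.ofReal t • (p : Measure Ω)
          + ENNReal.ofReal (1 - t) • (q : Measure Ω) → r ∈ C)
    (x : Ω) (μ μ' : Measure Ω) [IsFiniteMeasure μ] [IsFiniteMeasure μ'] :
    ell C x μ * ell C x μ' ≤ ell C x (μ + μ') := by
  classical
  open Real Set in
  set S : Measure Ω → Set ℝ := fun ν => {t : ℝ | ∃ q ∈ C, (q : Measure Ω)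
    = (ν Set.univ + ENNReal.ofReal t)⁻¹ • (ν + ENNReal.ofReal t • Measure.dirac x)} with hSdef
  have hellS : ∀ ν : Measure Ω, ell C x ν = expMeasure 1 (S ν) := fun ν => rfl
  have hprob : IsProbabilityMeasure (expMeasure 1) := isProbabilityMeasure_expMeasure one_pos
  have hadd : ∀ s ∈ S μ ∩ Ici 0, ∀ t ∈ S μ' ∩ Ici 0, s + t ∈ S (μ + μ') := by
    intro s hs t ht
    exact StmtAux.mem_S_add C hconv x μ μ' hs.2 ht.2 hs.1 ht.1
  by_cases hne : (S μ ∩ Set.Ici 0).Nonempty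
  · set a₀ := sInf (S μ ∩ Ici 0) with ha₀def
    have hbdd : BddBelow (S μ ∩ Ici 0) := ⟨0, fun y hy => hy.2⟩
    have ha₀0 : 0 ≤ a₀ := le_csInf hne fun y hy => hy.2
    have hub : ell C x μ ≤ ENNReal.ofReal (rexp (-a₀)) := by
      rw [hellS]
      calc expMeasure 1 (S μ) ≤ expMeasure 1 (Ici a₀ ∪ Iio 0) := by
            refine measure_mono fun y hy => ?_
            by_cases h : 0 ≤ y
            · exact Or.inl (csInf_le hbdd ⟨hy, h⟩)
            · exact Or.inr (lt_of_not_ge h)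
        _ ≤ expMeasure 1 (Ici a₀) + expMeasure 1 (Iio 0) := measure_union_le _ _
        _ = ENNReal.ofReal (rexp (-a₀)) := by
            rw [StmtAux.nu_Iio_zero, add_zero, StmtAux.nu_Ici ha₀0]
    have hP' : ell C x μ' ≤ expMeasure 1 (S μ' ∩ Ici 0) := by
      rw [hellS]
      calc expMeasure 1 (S μ') ≤ expMeasure 1 ((S μ' ∩ Ici 0) ∪ Iio 0) := by
            refine measure_mono fun y hy => ?_
            by_cases h : 0 ≤ y
            · exact Or.inl ⟨hy, h⟩
            · exact Or.inr (lt_of_not_ge h)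
        _ ≤ expMeasure 1 (S μ' ∩ Ici 0) + expMeasure 1 (Iio 0) := measure_union_le _ _
        _ = expMeasure 1 (S μ' ∩ Ici 0) := by rw [StmtAux.nu_Iio_zero, add_zero]
    have hmain : ∀ a ∈ S μ ∩ Ici 0,
        ENNReal.ofReal (rexp (-a)) * ell C x μ' ≤ ell C x (μ + μ') := by
      intro a ha
      calc ENNReal.ofReal (rexp (-a)) * ell C x μ'
          ≤ ENNReal.ofReal (rexp (-a)) * expMeasure 1 (S μ' ∩ Ici 0) :=
            mul_le_mul_right hP' _
        _ ≤ expMeasure 1 ((a + ·) '' (S μ' ∩ Ici 0)) :=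
            StmtAux.nu_translate ha.2 fun y hy => hy.2
        _ ≤ ell C x (μ + μ') := by
            rw [hellS]
            refine measure_mono ?_
            rintro _ ⟨t, ht, rfl⟩
            exact hadd a ha t ht
    have hlim : ENNReal.ofReal (rexp (-a₀)) * ell C x μ' ≤ ell C x (μ + μ') := by
      have hc : Continuous fun ε : ℝ => ENNReal.ofReal (rexp (-(a₀ + ε))) :=
        ENNReal.continuous_ofReal.comp (Real.continuous_exp.comp ((continuous_const.add continuous_id).neg))
      have htend0 : Filter.Tendsto (fun ε : ℝ => ENNReal.ofReal (rexp (-(a₀ + ε))))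
          (nhdsWithin 0 (Ioi 0)) (nhds (ENNReal.ofReal (rexp (-a₀)))) := by
        have h := hc.tendsto 0
        simp only [add_zero] at h
        exact h.mono_left nhdsWithin_le_nhds
      have htend : Filter.Tendsto
          (fun ε : ℝ => ENNReal.ofReal (rexp (-(a₀ + ε))) * ell C x μ')
          (nhdsWithin 0 (Ioi 0))
          (nhds (ENNReal.ofReal (rexp (-a₀)) * ell C x μ')) := by
        refine ENNReal.Tendsto.mul_const htend0 (Or.inr ?_)
        rw [hellS]
        exact measure_ne_top _ _
      refine le_of_tendsto htend ?_
      filter_upwards [self_mem_nhdsWithin] with ε hε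
      have hε0 : (0:ℝ) < ε := hε
      obtain ⟨a, haS, halt⟩ := exists_lt_of_csInf_lt hne (lt_add_of_pos_right a₀ hε0)
      calc ENNReal.ofReal (rexp (-(a₀ + ε))) * ell C x μ'
          ≤ ENNReal.ofReal (rexp (-a)) * ell C x μ' := by
            refine mul_le_mul_left (ENNReal.ofReal_le_ofReal ?_) _
            exact exp_le_exp.mpr (by linarith)
        _ ≤ ell C x (μ + μ') := hmain a haS
    calc ell C x μ * ell C x μ' ≤ ENNReal.ofReal (rexp (-a₀)) * ell C x μ' :=
          mul_le_mul_left hub _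
      _ ≤ ell C x (μ + μ') := hlim
  · have h0 : ell C x μ = 0 := by
      rw [hellS]
      refine le_antisymm ?_ zero_le
      rw [← StmtAux.nu_Iio_zero]
      refine measure_mono fun y hy => ?_
      by_contra h
      exact hne ⟨y, hy, (le_of_not_gt fun hlt => h hlt : (0:ℝ) ≤ y)⟩
    rw [h0, zero_mul]
    exact zero_le
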